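/- Let k ≥ 3 and ℓ ≥ 0, let G be a finite simple (P3+ℓP1)-free graph, and let S be a maximum independent set of G with |S| ≥ (k−1)²·(ℓ+3). Let A be the set of vertices outside S having exactly one neighbor in S, and let b be a vertex outside S having at least two neighbors in S. Then for every subset I ⊆ A with |I| = ℓ, the vertex b has at least two neighbors in S that have no neighbor in I. -/

import Mathlib

/-!
Two vertices of `S` adjacent to `b` span with `b` an induced `P₃`, and `ℓ` further vertices of `S`
not adjacent to `b` would complete it to an induced `P₃ + ℓP₁`; so `b` misses fewer than `ℓ`
vertices of `S`. Every vertex of `I` has a single neighbour in `S`, so at most `ℓ` vertices of `S`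
see `I`. The remaining `|S| - 2ℓ + 1 ≥ 2` vertices of `S` are adjacent to `b` and see no vertex
of `I`.
-/

open SimpleGraph

/-- The graph `P₃ + ℓP₁`: disjoint union of a path on 3 vertices and `ℓ` isolated vertices. -/
def P3PlusP1 (ℓ : ℕ) : SimpleGraph (Fin 3 ⊕ Fin ℓ) :=
  pathGraph 3 ⊕g (⊥ : SimpleGraph (Fin ℓ))

/-- `G` is `H`-free: no induced subgraph of `G` is isomorphic to `H`. -/
def HFree {W V : Type*} (H : SimpleGraph W) (G : SimpleGraph V) : Prop :=
  IsEmpty (H ↪g G)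

/-- `S` is an independent (stable) set of `G`. -/
def IndepSet {V : Type*} (G : SimpleGraph V) (S : Set V) : Prop :=
  S.Pairwise (fun a b => ¬ G.Adj a b)

namespace SimpleGraph

variable {V W W₁ W₂ : Type*} {G : SimpleGraph V}

def Embedding.sumElim {H₁ : SimpleGraph W₁} {H₂ : SimpleGraph W₂} (f₁ : H₁ ↪g G) (f₂ : H₂ ↪g G)
    (hne : ∀ x y, f₁ x ≠ f₂ y) (hadj : ∀ x y, ¬ G.Adj (f₁ x) (f₂ y)) : H₁ ⊕g H₂ ↪g G where
  toFun := Sum.elim f₁ f₂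
  inj' := by
    rintro (x | x) (y | y) h
    · exact congrArg Sum.inl (f₁.injective h)
    · exact absurd h (hne x y)
    · exact absurd h.symm (hne y x)
    · exact congrArg Sum.inr (f₂.injective h)
  map_rel_iff' {x y} := by
    change G.Adj (Sum.elim f₁ f₂ x) (Sum.elim f₁ f₂ y) ↔ _
    rcases x with x | x <;> rcases y with y | y
    · simp
    · simpa using hadj x y
    · simpa [G.adj_comm] using hadj y x
    · simp

def Embedding.botOfNotAdj (f : W ↪ V) (h : ∀ x y, ¬ G.Adj (f x) (f y)) :
    (⊥ : SimpleGraph W) ↪g G where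
  toEmbedding := f
  map_rel_iff' {x y} := by simpa using h x y

def Embedding.pathGraphThree {a b c : V} (hab : G.Adj a b) (hbc : G.Adj b c) (hac : ¬ G.Adj a c)
    (hne : a ≠ c) : pathGraph 3 ↪g G where
  toFun := ![a, b, c]
  inj' := by
    intro x y h
    fin_cases x <;> fin_cases y <;> simp_all [hab.ne, hbc.ne, hab.ne.symm, hbc.ne.symm, hne.symm]
  map_rel_iff' {x y} := by
    change G.Adj (![a, b, c] x) (![a, b, c] y) ↔ _
    fin_cases x <;> fin_cases y <;> simp [pathGraph_adj, G.adj_comm, hab, hbc, hac]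

theorem ncard_setOf_exists_adj_le [Finite V] {S I : Set V}
    (hI : ∀ a ∈ I, {s ∈ S | G.Adj a s}.ncard ≤ 1) :
    {s ∈ S | ∃ a ∈ I, G.Adj s a}.ncard ≤ I.ncard := by
  have hIfin := I.toFinite
  have hunion : {s ∈ S | ∃ a ∈ I, G.Adj s a} = ⋃ a ∈ hIfin.toFinset, {s ∈ S | G.Adj a s} := by
    ext s
    simp [G.adj_comm]
  calc {s ∈ S | ∃ a ∈ I, G.Adj s a}.ncard
      ≤ ∑ a ∈ hIfin.toFinset, {s ∈ S | G.Adj a s}.ncard :=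
        hunion ▸ Finset.set_ncard_biUnion_le _ _
    _ ≤ ∑ a ∈ hIfin.toFinset, 1 := Finset.sum_le_sum fun a ha => hI a (by simpa using ha)
    _ = I.ncard := by simp [Set.ncard_eq_toFinset_card I hIfin]

end SimpleGraph

section

variable {V : Type*} {G : SimpleGraph V} {S : Set V}

theorem IndepSet.not_adj (hS : IndepSet G S) {x y : V} (hx : x ∈ S) (hy : y ∈ S) :
    ¬ G.Adj x y :=
  fun h => hS hx hy h.ne h

theorem HFree.ncard_setOf_not_adj_lt [Finite V] {ℓ : ℕ} (hfree : HFree (P3PlusP1 ℓ) G)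
    (hS : IndepSet G S) {b s₁ s₂ : V} (hs₁ : s₁ ∈ S) (hs₂ : s₂ ∈ S) (hne : s₁ ≠ s₂)
    (hb₁ : G.Adj b s₁) (hb₂ : G.Adj b s₂) : {s ∈ S | ¬ G.Adj b s}.ncard < ℓ := by
  by_contra! hℓ
  have := Fintype.ofFinite V
  classical
  obtain ⟨g⟩ : Nonempty (Fin ℓ ↪ {s ∈ S | ¬ G.Adj b s}) :=
    Function.Embedding.nonempty_of_card_le
      (by rwa [Fintype.card_fin, ← Nat.card_eq_fintype_card, Nat.card_coe_set_eq])
  refine hfree.false <| (Embedding.pathGraphThree hb₁.symm hb₂ (hS.not_adj hs₁ hs₂) hne).sumElim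
    (Embedding.botOfNotAdj (g.trans (Function.Embedding.subtype _))
      fun x y => hS.not_adj (g x).2.1 (g y).2.1) ?_ ?_
  all_goals
    intro x y
    obtain ⟨hyS, hby⟩ := (g y).2
    fin_cases x
  · exact show s₁ ≠ g y from fun h => hby (h ▸ hb₁)
  · exact show b ≠ g y from fun h => hS.not_adj (h ▸ hyS) hs₁ hb₁
  · exact show s₂ ≠ g y from fun h => hby (h ▸ hb₂)
  · exact hS.not_adj hs₁ hyS
  · exact hby
  · exact hS.not_adj hs₂ hyS

end

theorem stmt8_general (k ℓ : ℕ) (hk : 3 ≤ k) (V : Type*) [Fintype V] (G : SimpleGraph V)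
    (hfree : HFree (P3PlusP1 ℓ) G)
    (S : Set V) (hS : IndepSet G S)
    (hScard : (k - 1) ^ 2 * (ℓ + 3) ≤ S.ncard)
    (b : V) (hnbrs : 2 ≤ {s ∈ S | G.Adj b s}.ncard)
    (I : Set V) (hIA : I ⊆ {v : V | v ∉ S ∧ {s ∈ S | G.Adj v s}.ncard = 1})
    (hIcard : I.ncard = ℓ) :
    2 ≤ {s ∈ S | G.Adj b s ∧ ∀ a ∈ I, ¬ G.Adj s a}.ncard := by
  obtain ⟨s₁, s₂, ⟨hs₁, hb₁⟩, ⟨hs₂, hb₂⟩, hne⟩ := (Set.one_lt_ncard_iff).mp hnbrs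
  set good := {s ∈ S | G.Adj b s ∧ ∀ a ∈ I, ¬ G.Adj s a}
  set nearI := {s ∈ S | ∃ a ∈ I, G.Adj s a}
  set far := {s ∈ S | ¬ G.Adj b s}
  have hfar : far.ncard < ℓ := hfree.ncard_setOf_not_adj_lt hS hs₁ hs₂ hne hb₁ hb₂
  have hnearI : nearI.ncard ≤ ℓ := hIcard ▸ ncard_setOf_exists_adj_le fun a ha => (hIA ha).2.le
  have hcover : S ⊆ good ∪ nearI ∪ far := by
    intro s hs
    by_cases hbs : G.Adj b s <;> by_cases hI : ∃ a ∈ I, G.Adj s a <;> simp_all [good, nearI, far]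
  have hcount : S.ncard ≤ good.ncard + nearI.ncard + far.ncard :=
    calc S.ncard ≤ (good ∪ nearI ∪ far).ncard := Set.ncard_le_ncard hcover
      _ ≤ (good ∪ nearI).ncard + far.ncard := Set.ncard_union_le _ _
      _ ≤ good.ncard + nearI.ncard + far.ncard := Nat.add_le_add_right (Set.ncard_union_le _ _) _
  have hS4 : 4 * (ℓ + 3) ≤ S.ncard :=
    (Nat.mul_le_mul_right _ (Nat.pow_le_pow_left (by omega : 2 ≤ k - 1) 2)).trans hScard
  omega

theorem stmt8 (k ℓ : ℕ) (hk : 3 ≤ k) (V : Type*) [Fintype V] (G : SimpleGraph V)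
    (hfree : HFree (P3PlusP1 ℓ) G)
    (S : Set V) (hS : IndepSet G S) (hmax : ∀ T : Set V, IndepSet G T → T.ncard ≤ S.ncard)
    (hScard : (k - 1) ^ 2 * (ℓ + 3) ≤ S.ncard)
    (b : V) (hb : b ∉ S) (hnbrs : 2 ≤ {s ∈ S | G.Adj b s}.ncard)
    (I : Set V) (hIA : I ⊆ {v : V | v ∉ S ∧ {s ∈ S | G.Adj v s}.ncard = 1})
    (hIcard : I.ncard = ℓ) :
    2 ≤ {s ∈ S | G.Adj b s ∧ ∀ a ∈ I, ¬ G.Adj s a}.ncard :=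
  stmt8_general k ℓ hk V G hfree S hS hScard b hnbrs I hIA hIcard
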